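/- arXiv:1101.2731 — 3 statements merged into one kernel-verified Lean document; each statement's English description precedes it below -/
import Mathlib

section
/- Let n ≥ 2, let β ∈ SB_n with x_{n−1} | β, and let m ≥ 1. Define E_n = {α ∈ SB_{n+m} : x_j does not divide α for all j with 1 ≤ j ≤ n}. Then for γ ∈ SB_{n+m}, one has γ ∈ C_{n+m}(β) if and only if γ = γ₁ γ₂ for some γ₁ ∈ C_n(β) and some γ₂ ∈ E_n. -/
/-- The defining relations of the positive braid monoid `MB_∞` on generators
`x i`, `i : ℕ+`: the braid relations and the far-commutation relations. -/
def BraidRel : FreeMonoid ℕ+ → FreeMonoid ℕ+ → Prop := fun a b =>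
  (∃ i : ℕ+, a = FreeMonoid.of (i + 1) * FreeMonoid.of i * FreeMonoid.of (i + 1) ∧
      b = FreeMonoid.of i * FreeMonoid.of (i + 1) * FreeMonoid.of i) ∨
  (∃ i j : ℕ+, i + 2 ≤ j ∧ a = FreeMonoid.of i * FreeMonoid.of j ∧
      b = FreeMonoid.of j * FreeMonoid.of i)

/-- The congruence generated by the braid relations. -/
def braidCon : Con (FreeMonoid ℕ+) := conGen BraidRel

/-- The positive braid monoid `MB_∞`. -/
abbrev MB : Type := braidCon.Quotient

/-- The generator `x_i` of `MB_∞`, for `i : ℕ+`. -/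
def braidGen (i : ℕ+) : MB := braidCon.mk' (FreeMonoid.of i)

/-- The generator `x_i` of `MB_∞`, indexed by a natural number `i ≥ 1`
(junk value `x_1` for `i = 0`). -/
def X (i : ℕ) : MB := braidGen ⟨max i 1, lt_of_lt_of_le one_pos (le_max_right i 1)⟩

/-- `x_i` divides `β`: `β = δ * x_i * ε` for some `δ ε ∈ MB_∞`. -/
def GenDvd (i : ℕ) (β : MB) : Prop := ∃ δ ε : MB, β = δ * X i * ε

/-- `x_i` left-divides `β`: `β = x_i * ε` for some `ε ∈ MB_∞`. -/
def GenDvdL (i : ℕ) (β : MB) : Prop := ∃ ε : MB, β = X i * ε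

/-- `x_i` right-divides `β`: `β = δ * x_i` for some `δ ∈ MB_∞`. -/
def GenDvdR (i : ℕ) (β : MB) : Prop := ∃ δ : MB, β = δ * X i

/-- The set `SB_n` of simple braids in `MB_n`: products of words in the
generators `x_1, …, x_{n-1}` in which each generator appears at most once. -/
def SB (n : ℕ) : Set MB :=
  {β | ∃ w : List ℕ, w.Nodup ∧ (∀ i ∈ w, 1 ≤ i ∧ i < n) ∧ β = (w.map X).prod}

/-- The simple centralizer `C_n(β)` of `β` in `SB_n`. -/
def C (n : ℕ) (β : MB) : Set MB := {γ ∈ SB n | β * γ = γ * β}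

/-- `c_n(β)`, the cardinality of the simple centralizer `C_n(β)`. -/
noncomputable def c (n : ℕ) (β : MB) : ℕ := (C n β).ncard

/-! Under the permutation representation `x_i ↦ (i i+1)`, `β` moves `n` (its word contains
`x_{n-1}`) and fixes every point above `n`; a repetition-free word containing `x_n` sends `n` above `n`, itself
or through its inverse, so it cannot commute with `β`. Without `x_n`, the word of `γ` splits as
`γ₁ γ₂` with all letters of `γ₁` below `n` and all letters of `γ₂` above `n`, and `γ₂` commutes
with `β` by far commutation. Then `β γ₁ = γ₁ β` follows by applying the truncation
`MB → WithZero MB` that fixes `x_i` for `i < n`, kills `x_n` and sends `x_i` to `1` for `i > n`;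
this replaces cancellativity of the braid monoid. The same truncation detects divisibility by a
generator. -/

theorem List.prod_map_filter_mul_prod_map_filter_not_of_commute {α M : Type*} [Monoid M]
    (p : α → Bool) (f : α → M) (l : List α)
    (h : ∀ a ∈ l, ∀ b ∈ l, p a → ¬ p b → Commute (f a) (f b)) :
    ((l.filter p).map f).prod * ((l.filter fun a => !p a).map f).prod = (l.map f).prod := by
  induction l with
  | nil => simp
  | cons c l ih =>
    have ih := ih fun a ha b hb => h a (List.mem_cons_of_mem _ ha) b (List.mem_cons_of_mem _ hb)
    by_cases hc : p c
    · simp [hc, mul_assoc, ih]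
    · have hcomm : Commute ((l.filter p).map f).prod (f c) :=
        Commute.list_prod_left _ _ fun x hx => by
          obtain ⟨a, ha, rfl⟩ := List.mem_map.mp hx
          obtain ⟨ha, hpa⟩ := List.mem_filter.mp ha
          exact h a (List.mem_cons_of_mem _ ha) c List.mem_cons_self hpa hc
      simp only [List.filter_cons, hc, Bool.false_eq_true, if_false, Bool.not_false, if_true,
        List.map_cons, List.prod_cons, ← mul_assoc, hcomm.eq]
      rw [mul_assoc, ih]

namespace MB

open Equiv

lemma X_eq_braidGen {i : ℕ} (hi : 1 ≤ i) : X i = braidGen ⟨i, hi⟩ := by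
  simp only [X, max_eq_left hi]

lemma X_braid {i : ℕ} (hi : 1 ≤ i) : X (i + 1) * X i * X (i + 1) = X i * X (i + 1) * X i := by
  simp only [X_eq_braidGen hi, X_eq_braidGen (Nat.le_succ_of_le hi), braidGen, ← map_mul]
  exact (Con.eq _).mpr (ConGen.Rel.of _ _ (Or.inl ⟨⟨i, hi⟩, rfl, rfl⟩))

lemma commute_X_X {i j : ℕ} (hi : 1 ≤ i) (hij : i + 2 ≤ j) : Commute (X i) (X j) := by
  simp only [Commute, SemiconjBy, X_eq_braidGen hi, X_eq_braidGen (hi.trans (by omega : i ≤ j)),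
    braidGen, ← map_mul]
  exact (Con.eq _).mpr <|
    ConGen.Rel.of _ _ (Or.inr ⟨⟨i, hi⟩, ⟨j, _⟩, PNat.coe_le_coe _ _ |>.mp hij, rfl, rfl⟩)

lemma commute_prod_map_X {u v : List ℕ} {t : ℕ} (hu : ∀ a ∈ u, 1 ≤ a ∧ a < t)
    (hv : ∀ b ∈ v, t < b) : Commute (u.map X).prod (v.map X).prod :=
  Commute.list_prod_left _ _ fun _x hx => Commute.list_prod_right _ _ fun _y hy => by
    obtain ⟨a, ha, rfl⟩ := List.mem_map.mp hx
    obtain ⟨b, hb, rfl⟩ := List.mem_map.mp hy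
    exact commute_X_X (hu a ha).1 (by linarith [(hu a ha).2, hv b hb])

section lift

variable {M : Type*} [Monoid M] (f : ℕ → M)
  (hbraid : ∀ i, 1 ≤ i → f (i + 1) * f i * f (i + 1) = f i * f (i + 1) * f i)
  (hcomm : ∀ i j, 1 ≤ i → i + 2 ≤ j → Commute (f i) (f j))

def lift : MB →* M :=
  Con.lift _ (FreeMonoid.lift fun i : ℕ+ => f i) <| Con.conGen_le.mpr fun a b h => by
    rcases h with ⟨i, rfl, rfl⟩ | ⟨i, j, hij, rfl, rfl⟩
    · simpa [Con.ker_rel] using hbraid i i.pos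
    · simpa [Con.ker_rel] using (hcomm i j i.pos (PNat.coe_le_coe _ _ |>.mpr hij)).eq

lemma lift_X {i : ℕ} (hi : 1 ≤ i) : lift f hbraid hcomm (X i) = f i := by
  rw [X_eq_braidGen hi]
  exact (Con.lift_mk' _ _).trans (FreeMonoid.lift_eval_of _ _)

end lift

def perm : MB →* Perm ℕ :=
  lift (fun i => swap i (i + 1))
    (fun i _ => by ext x; simp only [Perm.mul_apply, swap_apply_def]; split_ifs <;> omega)
    (fun i j _ hij => by ext x; simp only [Perm.mul_apply, swap_apply_def]; split_ifs <;> omega)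

lemma perm_X {i : ℕ} (hi : 1 ≤ i) : perm (X i) = swap i (i + 1) := lift_X _ _ _ hi

lemma perm_prod_apply_of_forall_ne {w : List ℕ} {x : ℕ} (h : ∀ a ∈ w, 1 ≤ a ∧ a ≠ x ∧ a + 1 ≠ x) :
    perm (w.map X).prod x = x := by
  induction w with
  | nil => simp
  | cons a w ih =>
    obtain ⟨ha, hax, hax'⟩ := h a List.mem_cons_self
    rw [List.map_cons, List.prod_cons, map_mul, Perm.mul_apply,
      ih fun b hb => h b (List.mem_cons_of_mem _ hb), perm_X ha]
    exact swap_apply_of_ne_of_ne hax.symm hax'.symm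

lemma lt_perm_prod_apply_iff {w : List ℕ} {c : ℕ} (h : ∀ a ∈ w, 1 ≤ a ∧ a ≠ c) (x : ℕ) :
    c < perm (w.map X).prod x ↔ c < x := by
  induction w generalizing x with
  | nil => simp
  | cons a w ih =>
    obtain ⟨ha, hac⟩ := h a List.mem_cons_self
    have swap_lt_iff (y : ℕ) : c < swap a (a + 1) y ↔ c < y := by
      simp only [swap_apply_def]; split_ifs <;> omega
    rw [List.map_cons, List.prod_cons, map_mul, Perm.mul_apply, perm_X ha, swap_lt_iff,
      ih (fun b hb => h b (List.mem_cons_of_mem _ hb))]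

lemma perm_prod_reverse {w : List ℕ} (h : ∀ a ∈ w, 1 ≤ a) :
    perm (w.reverse.map X).prod = (perm (w.map X).prod)⁻¹ := by
  induction w with
  | nil => simp
  | cons a w ih =>
    simp only [List.reverse_cons, List.map_append, List.map_cons, List.map_nil, List.prod_append,
      List.prod_cons, List.prod_nil, mul_one, map_mul, mul_inv_rev, perm_X (h a List.mem_cons_self),
      swap_inv, ih fun b hb => h b (List.mem_cons_of_mem _ hb)]

lemma lt_perm_prod_apply_self {u v : List ℕ} {c : ℕ} (hc : 1 ≤ c) (hu : ∀ a ∈ u, 1 ≤ a ∧ a ≠ c)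
    (hv : ∀ a ∈ v, 1 ≤ a ∧ a ≠ c ∧ a + 1 ≠ c) : c < perm ((u ++ c :: v).map X).prod c := by
  rw [List.map_append, List.map_cons, List.prod_append, List.prod_cons, map_mul, map_mul,
    Perm.mul_apply, Perm.mul_apply, perm_prod_apply_of_forall_ne hv, perm_X hc, swap_apply_left,
    lt_perm_prod_apply_iff hu]
  exact c.lt_succ_self

lemma perm_prod_apply_succ_le {u v : List ℕ} {c : ℕ} (hc : 1 ≤ c) (hu : ∀ a ∈ u, 1 ≤ a ∧ a ≠ c)
    (hv : ∀ a ∈ v, 1 ≤ a ∧ a ≠ c + 1 ∧ a ≠ c) : perm ((u ++ c :: v).map X).prod (c + 1) ≤ c := by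
  rw [List.map_append, List.map_cons, List.prod_append, List.prod_cons, map_mul, map_mul,
    Perm.mul_apply, Perm.mul_apply, perm_prod_apply_of_forall_ne (x := c + 1) fun a ha => ?_,
    perm_X hc, swap_apply_right, ← not_lt, lt_perm_prod_apply_iff hu]
  · exact lt_irrefl c
  · obtain ⟨h1, h2, h3⟩ := hv a ha
    exact ⟨h1, h2, fun h => h3 (by omega)⟩

lemma lt_perm_prod_apply_or_lt_inv_apply {w : List ℕ} {c : ℕ} (hw : w.Nodup) (h : ∀ a ∈ w, 1 ≤ a)
    (hc : c ∈ w) : c < perm (w.map X).prod c ∨ c < (perm (w.map X).prod)⁻¹ c := by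
  obtain ⟨u, v, rfl⟩ := List.append_of_mem hc
  obtain ⟨-, hcv_nodup, hdisj⟩ := List.nodup_append.mp hw
  have hcv : c ∉ v := (List.nodup_cons.mp hcv_nodup).1
  have hc1 : 1 ≤ c := h c (by simp)
  have hu (a) (ha : a ∈ u) : 1 ≤ a ∧ a ≠ c := ⟨h a (by simp [ha]), hdisj a ha c (by simp)⟩
  have hv (a) (ha : a ∈ v) : 1 ≤ a ∧ a ≠ c := ⟨h a (by simp [ha]), fun hac => hcv (hac ▸ ha)⟩
  -- `c - 1` lies on at most one side of `c`; reversing the word inverts the permutation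
  by_cases hpred : c - 1 ∈ v
  · right
    have hpred_u : c - 1 ∉ u := fun hu' => hdisj _ hu' _ (List.mem_cons_of_mem _ hpred) rfl
    rw [← perm_prod_reverse h, List.reverse_append, List.reverse_cons, List.append_assoc,
      List.singleton_append]
    refine lt_perm_prod_apply_self hc1 (fun a ha => hv a (List.mem_reverse.mp ha)) fun a ha => ?_
    obtain ⟨ha1, hac⟩ := hu a (List.mem_reverse.mp ha)
    exact ⟨ha1, hac, fun h' => hpred_u <| by
      rw [← h', Nat.add_sub_cancel]; exact List.mem_reverse.mp ha⟩
  · left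
    refine lt_perm_prod_apply_self hc1 hu fun a ha => ⟨(hv a ha).1, (hv a ha).2, fun h' => ?_⟩
    exact hpred (by rw [← h', Nat.add_sub_cancel]; exact ha)

lemma perm_prod_apply_lt_self {w : List ℕ} {n : ℕ} (hw : w.Nodup) (h : ∀ a ∈ w, 1 ≤ a ∧ a < n)
    (hn : n - 1 ∈ w) : perm (w.map X).prod n < n := by
  obtain ⟨hn1, hlt⟩ := h _ hn
  obtain ⟨u, v, rfl⟩ := List.append_of_mem hn
  obtain ⟨-, hv_nodup, hdisj⟩ := List.nodup_append.mp hw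
  have hnv : n - 1 ∉ v := (List.nodup_cons.mp hv_nodup).1
  have hle := perm_prod_apply_succ_le (u := u) (v := v) hn1
    (fun a ha => ⟨(h a (by simp [ha])).1, hdisj a ha _ (by simp)⟩)
    (fun a ha => ⟨(h a (by simp [ha])).1, by have := (h a (by simp [ha])).2; omega,
      fun hac => hnv (hac ▸ ha)⟩)
  rw [Nat.sub_add_cancel (by omega)] at hle
  omega

lemma notMem_of_commute {u w : List ℕ} {n : ℕ} (hu : u.Nodup)
    (hu_range : ∀ a ∈ u, 1 ≤ a ∧ a < n) (hn : n - 1 ∈ u) (hw : w.Nodup) (hw_pos : ∀ a ∈ w, 1 ≤ a)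
    (hcomm : Commute (u.map X).prod (w.map X).prod) : n ∉ w := by
  intro hnw
  set π := perm (u.map X).prod
  have hfix (x) (hx : n < x) : π x = x :=
    perm_prod_apply_of_forall_ne fun a ha => by have := hu_range a ha; omega
  have hmove : π n ≠ n := (perm_prod_apply_lt_self hu hu_range hn).ne
  -- if `τ` commutes with `π` and `π` fixes `τ n`, then `π` fixes `n`
  have key (τ : Perm ℕ) (hτ : Commute π τ) (hlt : n < τ n) : False :=
    hmove <| τ.injective <| by rw [← Perm.mul_apply, ← hτ.eq, Perm.mul_apply, hfix _ hlt]
  have hσ := hcomm.map perm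
  rcases lt_perm_prod_apply_or_lt_inv_apply hw hw_pos hnw with hlt | hlt
  exacts [key _ hσ hlt, key _ hσ.inv_right hlt]

lemma exists_prod_map_X_eq_mul {w : List ℕ} {n N : ℕ} (hw : w.Nodup)
    (h : ∀ a ∈ w, 1 ≤ a ∧ a < N) (hnw : n ∉ w) :
    ∃ low high : List ℕ, low.Nodup ∧ (∀ a ∈ low, 1 ≤ a ∧ a < n) ∧
      high.Nodup ∧ (∀ a ∈ high, n < a ∧ a < N) ∧
      (low.map X).prod * (high.map X).prod = (w.map X).prod := by
  have hne (a) (ha : a ∈ w) : a ≠ n := fun h => hnw (h ▸ ha)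
  refine ⟨w.filter (· < n), w.filter fun a => !decide (a < n), hw.filter _, fun a ha => ?_,
    hw.filter _, fun a ha => ?_,
    List.prod_map_filter_mul_prod_map_filter_not_of_commute _ X w fun a ha b hb hab hb' => ?_⟩
  · obtain ⟨haw, hlt⟩ := List.mem_filter.mp ha
    exact ⟨(h a haw).1, of_decide_eq_true hlt⟩
  · obtain ⟨haw, hge⟩ := List.mem_filter.mp ha
    simp only [Bool.not_eq_true', decide_eq_false_iff_not, not_lt] at hge
    exact ⟨lt_of_le_of_ne hge (hne a haw).symm, (h a haw).2⟩
  · simp only [decide_eq_true_eq] at hab hb'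
    exact commute_X_X (h a ha).1 (by have := hne b hb; omega)

def truncate (t : ℕ) : MB →* WithZero MB :=
  lift (fun i => if i = t then 0 else if i < t then (X i : WithZero MB) else 1)
    (fun i hi => by
      by_cases h : i + 1 < t
      · simp only [if_neg (show i ≠ t by omega), if_neg (show i + 1 ≠ t by omega),
          if_pos h, if_pos (show i < t by omega), ← WithZero.coe_mul, X_braid hi]
      · by_cases h' : i = t ∨ i + 1 = t
        · rcases h' with rfl | rfl <;> simp
        · simp [if_neg (show i ≠ t by omega), if_neg (show i + 1 ≠ t by omega), h,
            show ¬ i < t by omega])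
    (fun i j hi hij => by
      by_cases h : j < t
      · simp only [if_neg (show i ≠ t by omega), if_neg (show j ≠ t by omega),
          if_pos h, if_pos (show i < t by omega)]
        exact (commute_X_X hi hij).map WithZero.coeMonoidHom
      · by_cases h' : j = t
        · simp [h']
        · simp only [if_neg h', if_neg h]
          exact Commute.one_right _)

lemma truncate_X_self {t : ℕ} (ht : 1 ≤ t) : truncate t (X t) = 0 := by
  simp [truncate, lift_X _ _ _ ht]

lemma truncate_X_ne_zero {t i : ℕ} (hi : 1 ≤ i) (hit : i ≠ t) : truncate t (X i) ≠ 0 := by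
  simp only [truncate, lift_X _ _ _ hi, if_neg hit]
  split_ifs <;> simp

lemma truncate_prod_of_forall_lt {t : ℕ} {w : List ℕ} (h : ∀ a ∈ w, 1 ≤ a ∧ a < t) :
    truncate t (w.map X).prod = (w.map X).prod := by
  induction w with
  | nil => simp
  | cons a w ih =>
    obtain ⟨ha, hat⟩ := h a List.mem_cons_self
    simp only [List.map_cons, List.prod_cons, map_mul, WithZero.coe_mul,
      ih fun b hb => h b (List.mem_cons_of_mem _ hb)]
    simp [truncate, lift_X _ _ _ ha, hat, hat.ne]

lemma truncate_prod_of_forall_gt {t : ℕ} {w : List ℕ} (h : ∀ a ∈ w, t < a) :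
    truncate t (w.map X).prod = 1 := by
  induction w with
  | nil => simp
  | cons a w ih =>
    have hat := h a List.mem_cons_self
    simp only [List.map_cons, List.prod_cons, map_mul,
      ih fun b hb => h b (List.mem_cons_of_mem _ hb)]
    simp [truncate, lift_X _ _ _ (show 1 ≤ a by omega), hat.ne', hat.not_gt]

lemma genDvd_prod_iff {j : ℕ} {w : List ℕ} (hj : 1 ≤ j) (h : ∀ a ∈ w, 1 ≤ a) :
    GenDvd j (w.map X).prod ↔ j ∈ w := by
  refine ⟨fun ⟨δ, ε, hdvd⟩ => by_contra fun hjw => ?_, fun hjw => ?_⟩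
  · refine List.prod_ne_zero (M₀ := WithZero MB) (l := w.map (truncate j ∘ X)) ?_ ?_
    · simp only [List.mem_map, Function.comp_apply, not_exists, not_and]
      exact fun a ha h0 =>
        truncate_X_ne_zero (t := j) (h a ha) (fun haj => hjw (by rwa [← haj])) h0
    · rw [← List.map_map, ← map_list_prod, hdvd]
      simp [truncate_X_self hj]
  · obtain ⟨u, v, rfl⟩ := List.append_of_mem hjw
    exact ⟨(u.map X).prod, (v.map X).prod, by simp [mul_assoc]⟩

lemma forall_not_genDvd_prod_iff {n : ℕ} {w : List ℕ} (h : ∀ a ∈ w, 1 ≤ a) :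
    (∀ j, 1 ≤ j → j ≤ n → ¬ GenDvd j (w.map X).prod) ↔ ∀ a ∈ w, n < a := by
  refine ⟨fun hfree a ha => not_le.mp fun han => hfree a (h a ha) han ?_,
    fun hw j hj hjn hdvd => ?_⟩
  · exact (genDvd_prod_iff (h a ha) h).mpr ha
  · exact (hw j ((genDvd_prod_iff hj h).mp hdvd)).not_ge hjn

lemma commute_of_commute_mul {t : ℕ} {u v w : List ℕ} (hu : ∀ a ∈ u, 1 ≤ a ∧ a < t)
    (hv : ∀ a ∈ v, 1 ≤ a ∧ a < t) (hw : ∀ a ∈ w, t < a)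
    (h : Commute (u.map X).prod ((v.map X).prod * (w.map X).prod)) :
    Commute (u.map X).prod (v.map X).prod := by
  have h' := congrArg (truncate t) h.eq
  simp only [map_mul, truncate_prod_of_forall_lt hu, truncate_prod_of_forall_lt hv,
    truncate_prod_of_forall_gt hw, mul_one, ← WithZero.coe_mul] at h'
  exact WithZero.coe_inj.mp h'

end MB

open MB in
theorem simple_centralizer_structure_general (n m : ℕ) (hn : 2 ≤ n) (β : MB)
    (hβ : β ∈ SB n) (hdvd : GenDvd (n - 1) β) (γ : MB) (hγ : γ ∈ SB (n + m)) :
    γ ∈ C (n + m) β ↔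
      ∃ γ₁ γ₂ : MB, γ₁ ∈ C n β ∧
        γ₂ ∈ {α ∈ SB (n + m) | ∀ j : ℕ, 1 ≤ j → j ≤ n → ¬ GenDvd j α} ∧
        γ = γ₁ * γ₂ := by
  obtain ⟨u, hu, hu_range, rfl⟩ := hβ
  have hn1 : n - 1 ∈ u := (genDvd_prod_iff (by omega) fun a ha => (hu_range a ha).1).mp hdvd
  constructor
  · rintro ⟨-, hcomm⟩
    obtain ⟨w, hw, hw_range, rfl⟩ := hγ
    have hnw := notMem_of_commute hu hu_range hn1 hw (fun a ha => (hw_range a ha).1) hcomm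
    obtain ⟨low, high, hlow, hlow_range, hhigh, hhigh_range, hsplit⟩ :=
      exists_prod_map_X_eq_mul hw hw_range hnw
    have hhigh_pos (a) (ha : a ∈ high) : 1 ≤ a := by linarith [(hhigh_range a ha).1]
    rw [← hsplit] at hcomm ⊢
    refine ⟨_, _, ⟨⟨low, hlow, hlow_range, rfl⟩, ?_⟩,
      ⟨⟨high, hhigh, fun a ha => ⟨hhigh_pos a ha, (hhigh_range a ha).2⟩, rfl⟩, ?_⟩, rfl⟩
    · exact commute_of_commute_mul hu_range hlow_range (fun a ha => (hhigh_range a ha).1) hcomm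
    · exact (forall_not_genDvd_prod_iff hhigh_pos).mpr fun a ha => (hhigh_range a ha).1
  · rintro ⟨γ₁, γ₂, ⟨-, h₁⟩, ⟨⟨v, -, hv_range, rfl⟩, hv_free⟩, rfl⟩
    have hv_high := (forall_not_genDvd_prod_iff fun a ha => (hv_range a ha).1).mp hv_free
    exact ⟨hγ, Commute.mul_right h₁ (commute_prod_map_X hu_range hv_high)⟩

/-- Theorem 1.3: if `β ∈ SB_n` with `x_{n-1} ∣ β` and `m ≥ 1`, then for
`γ ∈ SB_{n+m}`, one has `γ ∈ C_{n+m}(β)` iff `γ = γ₁γ₂` with `γ₁ ∈ C_n(β)` and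
`γ₂ ∈ E_n = {α ∈ SB_{n+m} : x_j ∤ α for all 1 ≤ j ≤ n}`. -/
theorem simple_centralizer_structure (n m : ℕ) (hn : 2 ≤ n) (hm : 1 ≤ m) (β : MB)
    (hβ : β ∈ SB n) (hdvd : GenDvd (n - 1) β) (γ : MB) (hγ : γ ∈ SB (n + m)) :
    γ ∈ C (n + m) β ↔
      ∃ γ₁ γ₂ : MB, γ₁ ∈ C n β ∧
        γ₂ ∈ {α ∈ SB (n + m) | ∀ j : ℕ, 1 ≤ j → j ≤ n → ¬ GenDvd j α} ∧
        γ = γ₁ * γ₂ :=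
  simple_centralizer_structure_general n m hn β hβ hdvd γ hγ
end

section
/- Let n ≥ 2 and let β, γ ∈ MB_∞. If x_{n−1} right-divides γβ and x_{n−1} does not divide β, then x_{n−1} right-divides γ. -/
/-!
Words over `ℕ+` present `MB_∞`, and two words represent the same braid exactly when a chain of
moves `i :: complement i j ↔ j :: complement j i` joins them. Garside's argument (induction on the
length of the words and then on the length of the chain, the head-of-chain case being the cube
condition for three generators) shows that `i :: u ≡ j :: v` forces `u ≡ complement i j ++ w` and
`v ≡ complement j i ++ w` for a common `w`. As `complement a m` starts with `m` for `a ≠ m`, a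
generator `m` that left-divides `b ++ g` can be pushed past every letter of `b` different from
`m`, so it left-divides `g`. Reversing words turns this into the statement about right divisors.
-/

namespace BraidWord

def Adj (i j : ℕ+) : Prop := i + 1 = j ∨ j + 1 = i

def Far (i j : ℕ+) : Prop := i + 2 ≤ j ∨ j + 2 ≤ i

instance : DecidableRel Adj := fun _ _ => inferInstanceAs (Decidable (_ ∨ _))

theorem Adj.symm {i j : ℕ+} (h : Adj i j) : Adj j i := Or.symm h

theorem Far.symm {i j : ℕ+} (h : Far i j) : Far j i := Or.symm h

theorem eq_or_adj_or_far (i j : ℕ+) : i = j ∨ Adj i j ∨ Far i j := by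
  simp only [Adj, Far, ← PNat.coe_inj, ← PNat.coe_le_coe, PNat.add_coe, PNat.val_ofNat]
  omega

theorem adj_or_far_of_ne {i j : ℕ+} (h : i ≠ j) : Adj i j ∨ Far i j :=
  (eq_or_adj_or_far i j).resolve_left h

theorem Adj.ne {i j : ℕ+} (h : Adj i j) : i ≠ j := by
  rintro rfl
  simp only [Adj, ← PNat.coe_inj, PNat.add_coe, PNat.val_ofNat] at h
  omega

theorem Far.ne {i j : ℕ+} (h : Far i j) : i ≠ j := by
  rintro rfl
  simp only [Far, ← PNat.coe_le_coe, PNat.add_coe, PNat.val_ofNat] at h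
  omega

theorem Far.not_adj {i j : ℕ+} (h : Far i j) : ¬ Adj i j := by
  simp only [Adj, Far, ← PNat.coe_inj, ← PNat.coe_le_coe, PNat.add_coe, PNat.val_ofNat] at *
  omega

theorem far_of_adj_of_adj {i j k : ℕ+} (hki : Adj k i) (hkj : Adj k j) (hij : i ≠ j) :
    Far i j := by
  rw [Ne, ← PNat.coe_inj] at hij
  simp only [Adj, Far, ← PNat.coe_inj, ← PNat.coe_le_coe, PNat.add_coe, PNat.val_ofNat] at *
  omega

/-- The defining relations of `MB_∞` are exactly `i :: complement i j = j :: complement j i`;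
the common value is the least common multiple of `x_i` and `x_j` for left divisibility. -/
def complement (i j : ℕ+) : List ℕ+ :=
  if i = j then [] else if Adj i j then [j, i] else [j]

@[simp]
theorem complement_self (i : ℕ+) : complement i i = [] := by simp [complement]

theorem complement_of_adj {i j : ℕ+} (h : Adj i j) : complement i j = [j, i] := by
  simp [complement, h.ne, h]

theorem complement_of_far {i j : ℕ+} (h : Far i j) : complement i j = [j] := by
  simp [complement, h.ne, h.not_adj]

theorem length_complement_comm (i j : ℕ+) :
    (complement i j).length = (complement j i).length := by
  rcases eq_or_adj_or_far i j with rfl | h | h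
  · rfl
  · simp [complement_of_adj h, complement_of_adj h.symm]
  · simp [complement_of_far h, complement_of_far h.symm]

theorem exists_complement_eq_cons {i j : ℕ+} (h : i ≠ j) : ∃ r, complement i j = j :: r := by
  unfold complement
  split_ifs with hij
  exacts [absurd hij h, ⟨_, rfl⟩, ⟨_, rfl⟩]

theorem forall_mem_complement {p : ℕ+ → Prop} {i j : ℕ+} (hi : p i) (hj : p j) :
    ∀ a ∈ complement i j, p a := by
  unfold complement
  split_ifs <;> simp [hi, hj]

theorem reverse_cons_complement (i j : ℕ+) : ∃ k l,
    (i :: complement i j).reverse = k :: complement k l ∧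
      (j :: complement j i).reverse = l :: complement l k := by
  rcases eq_or_adj_or_far i j with rfl | h | h
  · exact ⟨i, i, by simp⟩
  · exact ⟨i, j, by simp [complement_of_adj h, complement_of_adj h.symm]⟩
  · exact ⟨j, i, by simp [complement_of_far h, complement_of_far h.symm]⟩

inductive Step : List ℕ+ → List ℕ+ → Prop
  | rel (p s : List ℕ+) (i j : ℕ+) :
      Step (p ++ i :: (complement i j ++ s)) (p ++ j :: (complement j i ++ s))

def Equivalent : List ℕ+ → List ℕ+ → Prop := Relation.ReflTransGen Step

infix:50 " ≡ᵇ " => Equivalent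

namespace Step

theorem symm {u v : List ℕ+} (h : Step u v) : Step v u := by
  cases h with
  | rel p s i j => exact rel p s j i

theorem append_left {u v : List ℕ+} (h : Step u v) (l : List ℕ+) : Step (l ++ u) (l ++ v) := by
  cases h with
  | rel p s i j => simpa using rel (l ++ p) s i j

theorem append_right {u v : List ℕ+} (h : Step u v) (r : List ℕ+) : Step (u ++ r) (v ++ r) := by
  cases h with
  | rel p s i j => simpa using rel p (s ++ r) i j

theorem reverse {u v : List ℕ+} (h : Step u v) : Step u.reverse v.reverse := by
  cases h with
  | rel p s i j =>
    obtain ⟨k, l, hi, hj⟩ := reverse_cons_complement i j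
    have key := rel s.reverse p.reverse k l
    rw [← List.cons_append, ← List.cons_append, ← hi, ← hj] at key
    simp only [List.reverse_append, ← List.cons_append, List.append_assoc] at key ⊢
    exact key

theorem length_eq {u v : List ℕ+} (h : Step u v) : u.length = v.length := by
  cases h with
  | rel p s i j => simp [length_complement_comm i j]

end Step

namespace Equivalent

@[refl]
theorem refl (u : List ℕ+) : u ≡ᵇ u := Relation.ReflTransGen.refl

theorem of_step {u v : List ℕ+} (h : Step u v) : u ≡ᵇ v := Relation.ReflTransGen.single h

theorem symm {u v : List ℕ+} (h : u ≡ᵇ v) : v ≡ᵇ u := by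
  induction h with
  | refl => rfl
  | tail _ hs ih => exact Relation.ReflTransGen.head hs.symm ih

theorem trans {u v w : List ℕ+} (h : u ≡ᵇ v) (h' : v ≡ᵇ w) : u ≡ᵇ w :=
  Relation.ReflTransGen.trans h h'

instance : Trans Equivalent Equivalent Equivalent := ⟨trans⟩

theorem append_left {u v : List ℕ+} (h : u ≡ᵇ v) (l : List ℕ+) : l ++ u ≡ᵇ l ++ v :=
  Relation.ReflTransGen.lift (l ++ ·) (fun _ _ (hs : Step _ _) => hs.append_left l) _ _ h

theorem append_right {u v : List ℕ+} (h : u ≡ᵇ v) (r : List ℕ+) : u ++ r ≡ᵇ v ++ r :=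
  Relation.ReflTransGen.lift (· ++ r) (fun _ _ (hs : Step _ _) => hs.append_right r) _ _ h

theorem append {u v u' v' : List ℕ+} (h : u ≡ᵇ v) (h' : u' ≡ᵇ v') : u ++ u' ≡ᵇ v ++ v' :=
  (h.append_right u').trans (h'.append_left v)

theorem cons {u v : List ℕ+} (h : u ≡ᵇ v) (a : ℕ+) : a :: u ≡ᵇ a :: v := h.append_left [a]

theorem reverse {u v : List ℕ+} (h : u ≡ᵇ v) : u.reverse ≡ᵇ v.reverse :=
  Relation.ReflTransGen.lift List.reverse (fun _ _ (hs : Step _ _) => hs.reverse) _ _ h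

theorem length_eq {u v : List ℕ+} (h : u ≡ᵇ v) : u.length = v.length := by
  induction h with
  | refl => rfl
  | tail _ hs ih => exact ih.trans hs.length_eq

end Equivalent

theorem swap {i j : ℕ+} (h : Far i j) (l r : List ℕ+) : l ++ i :: j :: r ≡ᵇ l ++ j :: i :: r := by
  simpa [complement_of_far h, complement_of_far h.symm] using
    Equivalent.of_step (Step.rel l r i j)

theorem braid {i j : ℕ+} (h : Adj i j) (l r : List ℕ+) :
    l ++ i :: j :: i :: r ≡ᵇ l ++ j :: i :: j :: r := by
  simpa [complement_of_adj h, complement_of_adj h.symm] using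
    Equivalent.of_step (Step.rel l r i j)

theorem cons_append_equiv_of_far {k : ℕ+} {x : List ℕ+} (h : ∀ a ∈ x, Far k a) (s : List ℕ+) :
    k :: (x ++ s) ≡ᵇ x ++ k :: s := by
  induction x with
  | nil => rfl
  | cons a x ih =>
    simp only [List.mem_cons, forall_eq_or_imp] at h
    calc k :: a :: (x ++ s) ≡ᵇ a :: k :: (x ++ s) := swap h.1 [] _
      _ ≡ᵇ a :: (x ++ k :: s) := (ih h.2).cons a

theorem Step.cons_cases {i : ℕ+} {u b : List ℕ+} (h : Step (i :: u) b) :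
    (∃ u', Step u u' ∧ b = i :: u') ∨
      ∃ k u₂, u = complement i k ++ u₂ ∧ b = k :: (complement k i ++ u₂) := by
  generalize hw : i :: u = a at h
  cases h with
  | rel p s i' k =>
    rcases p with _ | ⟨a, p⟩
    · simp only [List.nil_append, List.cons.injEq] at hw
      obtain ⟨rfl, rfl⟩ := hw
      exact Or.inr ⟨k, s, rfl, rfl⟩
    · simp only [List.cons_append, List.cons.injEq] at hw
      obtain ⟨rfl, rfl⟩ := hw
      exact Or.inl ⟨_, Step.rel p s i' k, rfl⟩

def LcmBelow (L : ℕ) : Prop :=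
  ∀ ⦃i j : ℕ+⦄ ⦃u v : List ℕ+⦄, u.length < L → i :: u ≡ᵇ j :: v →
    ∃ w, u ≡ᵇ complement i j ++ w ∧ v ≡ᵇ complement j i ++ w

namespace LcmBelow

variable {L : ℕ}

theorem cancel_left (ih : LcmBelow L) {a u t : List ℕ+} (hlen : (a ++ u).length ≤ L)
    (h : a ++ u ≡ᵇ a ++ t) : u ≡ᵇ t := by
  induction a with
  | nil => exact h
  | cons c a iha =>
    obtain ⟨w, hu, ht⟩ := ih (by simpa using hlen) h
    rw [complement_self, List.nil_append] at hu ht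
    refine iha ?_ (hu.trans ht.symm)
    simp only [List.cons_append, List.length_cons] at hlen
    omega

theorem cube_of_far_far (ih : LcmBelow L) {i j k : ℕ+} {u t : List ℕ+}
    (hki : Far k i) (hkj : Far k j) (hlen : (complement k i ++ u).length ≤ L)
    (h : complement k i ++ u ≡ᵇ complement k j ++ t) :
    ∃ w, complement i k ++ u ≡ᵇ complement i j ++ w ∧
      complement j k ++ t ≡ᵇ complement j i ++ w := by
  simp only [complement_of_far hki, complement_of_far hkj, complement_of_far hki.symm,
    complement_of_far hkj.symm, List.singleton_append, List.length_cons] at h hlen ⊢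
  obtain ⟨s, hu, ht⟩ := ih hlen h
  exact ⟨k :: s,
    (hu.cons k).trans (cons_append_equiv_of_far (forall_mem_complement hki hkj) s),
    (ht.cons k).trans (cons_append_equiv_of_far (forall_mem_complement hkj hki) s)⟩

theorem cube_of_far_adj (ih : LcmBelow L) {i j k : ℕ+} {u t : List ℕ+}
    (hki : Far k i) (hkj : Adj k j) (hij : i ≠ j) (hlen : (complement k i ++ u).length ≤ L)
    (h : complement k i ++ u ≡ᵇ complement k j ++ t) :
    ∃ w, complement i k ++ u ≡ᵇ complement i j ++ w ∧
      complement j k ++ t ≡ᵇ complement j i ++ w := by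
  simp only [complement_of_far hki, complement_of_adj hkj, complement_of_far hki.symm,
    complement_of_adj hkj.symm, List.cons_append, List.nil_append, List.length_cons] at h hlen ⊢
  have hut : u.length = t.length + 1 := by simpa using h.length_eq
  obtain ⟨s, hu, hkt⟩ := ih hlen h
  rcases adj_or_far_of_ne hij with hij | hij
  · simp only [complement_of_adj hij, complement_of_adj hij.symm, List.cons_append,
      List.nil_append] at hu hkt ⊢
    have hts : t.length = s.length + 1 := by simpa using hkt.length_eq
    obtain ⟨r, ht, hjs⟩ := ih (by omega) hkt
    simp only [complement_of_far hki, complement_of_far hki.symm, List.singleton_append] at ht hjs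
    obtain ⟨q, hs, hr⟩ := ih (by omega) hjs
    simp only [complement_of_adj hkj, complement_of_adj hkj.symm] at hs hr
    refine ⟨[k, j, i] ++ q, ?_, ?_⟩
    · calc k :: u ≡ᵇ [k, j, i, k, j] ++ q := (hu.trans (hs.append_left [j, i])).cons k
        _ ≡ᵇ [k, j, k, i, j] ++ q := swap hki.symm [k, j] _
        _ ≡ᵇ [j, k, j, i, j] ++ q := braid hkj [] _
        _ ≡ᵇ [j, k, i, j, i] ++ q := braid hij.symm [j, k] _
        _ ≡ᵇ [j, i, k, j, i] ++ q := swap hki [j] _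
    · calc k :: j :: t ≡ᵇ [k, j, i, j, k] ++ q := ((ht.trans (hr.cons i)).cons j).cons k
        _ ≡ᵇ [k, i, j, i, k] ++ q := braid hij.symm [k] _
        _ ≡ᵇ [i, k, j, i, k] ++ q := swap hki [] _
        _ ≡ᵇ [i, k, j, k, i] ++ q := swap hki.symm [i, k, j] _
        _ ≡ᵇ [i, j, k, j, i] ++ q := braid hkj [i] _
  · simp only [complement_of_far hij, complement_of_far hij.symm, List.singleton_append]
      at hu hkt ⊢
    obtain ⟨r, ht, hs⟩ := ih (by omega) hkt
    simp only [complement_of_far hki, complement_of_far hki.symm, List.singleton_append] at ht hs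
    refine ⟨[k, j] ++ r, ?_, ?_⟩
    · calc k :: u ≡ᵇ [k, j, k] ++ r := (hu.trans (hs.cons j)).cons k
        _ ≡ᵇ [j, k, j] ++ r := braid hkj [] r
    · calc k :: j :: t ≡ᵇ [k, j, i] ++ r := (ht.cons j).cons k
        _ ≡ᵇ [k, i, j] ++ r := swap hij.symm [k] r
        _ ≡ᵇ [i, k, j] ++ r := swap hki [] _

theorem cube_of_adj_adj (ih : LcmBelow L) {i j k : ℕ+} {u t : List ℕ+}
    (hki : Adj k i) (hkj : Adj k j) (hij : i ≠ j) (hlen : (complement k i ++ u).length ≤ L)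
    (h : complement k i ++ u ≡ᵇ complement k j ++ t) :
    ∃ w, complement i k ++ u ≡ᵇ complement i j ++ w ∧
      complement j k ++ t ≡ᵇ complement j i ++ w := by
  have hij := far_of_adj_of_adj hki hkj hij
  simp only [complement_of_adj hki, complement_of_adj hkj, complement_of_adj hki.symm,
    complement_of_adj hkj.symm, complement_of_far hij, complement_of_far hij.symm,
    List.cons_append, List.nil_append, List.length_cons] at h hlen ⊢
  have hut : u.length = t.length := by simpa using h.length_eq
  obtain ⟨s, hku, hkt⟩ := ih (by simp only [List.length_cons]; omega) h
  simp only [complement_of_far hij, complement_of_far hij.symm, List.singleton_append] at hku hkt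
  obtain ⟨r, hu, hs⟩ := ih (by omega) hku
  obtain ⟨q, ht, hs'⟩ := ih (by omega) hkt
  simp only [complement_of_adj hki, complement_of_adj hkj, complement_of_adj hki.symm,
    complement_of_adj hkj.symm, List.cons_append, List.nil_append] at hu hs ht hs'
  have hur : u.length = r.length + 2 := by simpa using hu.length_eq
  have hjr : j :: r ≡ᵇ i :: q :=
    ih.cancel_left (a := [k]) (by simp only [List.singleton_append, List.length_cons]; omega)
      (hs.symm.trans hs')
  obtain ⟨p, hr, hq⟩ := ih (by omega) hjr
  simp only [complement_of_far hij, complement_of_far hij.symm, List.singleton_append] at hr hq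
  refine ⟨[k, j, i, k] ++ p, ?_, ?_⟩
  · calc k :: i :: u ≡ᵇ [k, i, j, k, i] ++ p :=
          (hu.trans (hr.append_left [j, k])).append_left [k, i]
      _ ≡ᵇ [k, j, i, k, i] ++ p := swap hij [k] _
      _ ≡ᵇ [k, j, k, i, k] ++ p := braid hki.symm [k, j] _
      _ ≡ᵇ [j, k, j, i, k] ++ p := braid hkj [] _
  · calc k :: j :: t ≡ᵇ [k, j, i, k, j] ++ p :=
          (ht.trans (hq.append_left [i, k])).append_left [k, j]
      _ ≡ᵇ [k, i, j, k, j] ++ p := swap hij.symm [k] _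
      _ ≡ᵇ [k, i, k, j, k] ++ p := braid hkj.symm [k, i] _
      _ ≡ᵇ [i, k, i, j, k] ++ p := braid hki [] _
      _ ≡ᵇ [i, k, j, i, k] ++ p := swap hij [i, k] _

theorem cube (ih : LcmBelow L) {i j k : ℕ+} {u t : List ℕ+}
    (hlen : (complement k i ++ u).length ≤ L)
    (h : complement k i ++ u ≡ᵇ complement k j ++ t) :
    ∃ w, complement i k ++ u ≡ᵇ complement i j ++ w ∧
      complement j k ++ t ≡ᵇ complement j i ++ w := by
  rcases eq_or_ne k i with rfl | hki
  · exact ⟨t, by simpa using h, by rfl⟩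
  rcases eq_or_ne j k with rfl | hjk
  · exact ⟨u, by rfl, by simpa using h.symm⟩
  rcases eq_or_ne i j with rfl | hij
  · refine ⟨complement i k ++ u, by rw [complement_self]; rfl, ?_⟩
    rw [complement_self, List.nil_append]
    exact (ih.cancel_left hlen h).symm.append_left _
  rcases adj_or_far_of_ne hki with hki | hki <;> rcases adj_or_far_of_ne hjk.symm with hkj | hkj
  · exact ih.cube_of_adj_adj hki hkj hij hlen h
  · obtain ⟨w, ht, hu⟩ :=
      ih.cube_of_far_adj hkj hki hij.symm (h.length_eq ▸ hlen) h.symm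
    exact ⟨w, hu, ht⟩
  · exact ih.cube_of_far_adj hki hkj hij hlen h
  · exact ih.cube_of_far_far hki hkj hlen h

theorem succ (ih : LcmBelow L) : LcmBelow (L + 1) := by
  intro i j u v hu h
  generalize hw : i :: u = a at h
  induction h using Relation.ReflTransGen.head_induction_on generalizing i u with
  | refl =>
    obtain ⟨rfl, rfl⟩ := List.cons.inj hw
    exact ⟨u, by rw [complement_self]; rfl, by rw [complement_self]; rfl⟩
  | head hs _ ihc =>
    subst hw
    rcases hs.cons_cases with ⟨u', hs', rfl⟩ | ⟨k, u₂, rfl, rfl⟩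
    · obtain ⟨w, hu', hv⟩ := ihc (hs'.length_eq ▸ hu) rfl
      exact ⟨w, (Equivalent.of_step hs').trans hu', hv⟩
    · have hlen : (complement k i ++ u₂).length ≤ L := by
        simp only [List.length_append, length_complement_comm k i] at hu ⊢
        omega
      obtain ⟨t, hu₂, hv⟩ := ihc (Nat.lt_succ_of_le hlen) rfl
      obtain ⟨w, hu, ht⟩ := ih.cube hlen hu₂
      exact ⟨w, hu, hv.trans ht⟩

end LcmBelow

theorem lcmBelow : ∀ L, LcmBelow L
  | 0 => fun _ _ _ _ hu => absurd hu (Nat.not_lt_zero _)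
  | L + 1 => (lcmBelow L).succ

theorem exists_of_cons_equiv_cons {i j : ℕ+} {u v : List ℕ+} (h : i :: u ≡ᵇ j :: v) :
    ∃ w, u ≡ᵇ complement i j ++ w ∧ v ≡ᵇ complement j i ++ w :=
  lcmBelow (u.length + 1) (Nat.lt_succ_self _) h

theorem exists_cons_of_append_equiv_cons {m : ℕ+} {b g d : List ℕ+} (hb : m ∉ b)
    (h : b ++ g ≡ᵇ m :: d) : ∃ e, g ≡ᵇ m :: e := by
  induction b generalizing d with
  | nil => exact ⟨d, h⟩
  | cons a b ihb =>
    obtain ⟨ham, hb⟩ := List.ne_and_not_mem_of_not_mem_cons hb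
    obtain ⟨w, hbg, -⟩ := exists_of_cons_equiv_cons h
    obtain ⟨r, hr⟩ := exists_complement_eq_cons (Ne.symm ham)
    rw [hr, List.cons_append] at hbg
    exact ihb hb hbg

theorem exists_append_singleton_of_append_equiv {m : ℕ+} {g b d : List ℕ+} (hb : m ∉ b)
    (h : g ++ b ≡ᵇ d ++ [m]) : ∃ e, g ≡ᵇ e ++ [m] := by
  have hrev : b.reverse ++ g.reverse ≡ᵇ m :: d.reverse := by simpa using h.reverse
  obtain ⟨e, he⟩ := exists_cons_of_append_equiv_cons (by simpa using hb) hrev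
  exact ⟨e.reverse, by simpa using he.reverse⟩

def toMB (w : List ℕ+) : MB := braidCon.mk' (FreeMonoid.ofList w)

theorem toMB_append (u v : List ℕ+) : toMB (u ++ v) = toMB u * toMB v :=
  map_mul braidCon.mk' _ _

theorem toMB_surjective : Function.Surjective toMB :=
  braidCon.mk'_surjective.comp FreeMonoid.ofList.surjective

theorem X_coe (m : ℕ+) : X m = toMB [m] :=
  congrArg braidGen (PNat.eq (max_eq_left m.pos))

theorem genDvd_toMB_of_mem {m : ℕ+} {w : List ℕ+} (h : m ∈ w) : GenDvd m (toMB w) := by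
  obtain ⟨s, t, rfl⟩ := List.append_of_mem h
  exact ⟨toMB s, toMB t, by rw [X_coe, ← toMB_append, ← toMB_append, List.append_assoc]; rfl⟩

theorem toMB_eq_of_braidRel {a b : FreeMonoid ℕ+} (h : BraidRel a b) :
    toMB a.toList = toMB b.toList :=
  braidCon.eq.2 (ConGen.Rel.of _ _ h)

theorem toMB_cons_complement (i j : ℕ+) :
    toMB (i :: complement i j) = toMB (j :: complement j i) := by
  rcases eq_or_adj_or_far i j with rfl | h | h
  · rfl
  · rw [complement_of_adj h, complement_of_adj h.symm]
    rcases h with rfl | rfl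
    exacts [(toMB_eq_of_braidRel (Or.inl ⟨i, rfl, rfl⟩)).symm,
      toMB_eq_of_braidRel (Or.inl ⟨j, rfl, rfl⟩)]
  · rw [complement_of_far h, complement_of_far h.symm]
    rcases h with h | h
    exacts [toMB_eq_of_braidRel (Or.inr ⟨i, j, h, rfl, rfl⟩),
      (toMB_eq_of_braidRel (Or.inr ⟨j, i, h, rfl, rfl⟩)).symm]

theorem Equivalent.toMB_eq {u v : List ℕ+} (h : u ≡ᵇ v) : toMB u = toMB v := by
  induction h with
  | refl => rfl
  | tail _ hs ih =>
    rw [ih]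
    cases hs with
    | rel p s i j =>
      simp only [← List.cons_append, toMB_append, toMB_cons_complement i j]

def equivalentCon : Con (FreeMonoid ℕ+) where
  r a b := a.toList ≡ᵇ b.toList
  iseqv := ⟨fun _ => .refl _, .symm, .trans⟩
  mul' h h' := h.append h'

theorem braidRel_step {a b : FreeMonoid ℕ+} (h : BraidRel a b) : Step a.toList b.toList := by
  rcases h with ⟨i, rfl, rfl⟩ | ⟨i, j, hij, rfl, rfl⟩
  · simpa [complement_of_adj (Or.inr rfl : Adj (i + 1) i),
      complement_of_adj (Or.inl rfl : Adj i (i + 1))] using Step.rel [] [] (i + 1) i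
  · simpa [complement_of_far (Or.inl hij : Far i j), complement_of_far (Or.inr hij : Far j i)]
      using Step.rel [] [] i j

theorem toMB_eq_toMB_iff {u v : List ℕ+} : toMB u = toMB v ↔ u ≡ᵇ v := by
  refine ⟨fun h => ?_, Equivalent.toMB_eq⟩
  have hle : braidCon ≤ equivalentCon :=
    Con.conGen_le.2 fun _ _ hr => Equivalent.of_step (braidRel_step hr)
  exact hle (braidCon.eq.1 h)

end BraidWord

open BraidWord in
/-- Lemma 2.2 b): if `x_{n-1}` right-divides `γβ` and `x_{n-1}` does not divide
`β`, then `x_{n-1}` right-divides `γ`. -/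
theorem right_dvd_of_right_dvd_mul (n : ℕ) (hn : 2 ≤ n) (β γ : MB)
    (h1 : GenDvdR (n - 1) (γ * β)) (h2 : ¬ GenDvd (n - 1) β) :
    GenDvdR (n - 1) γ := by
  obtain ⟨m, hm⟩ : ∃ m : ℕ+, (m : ℕ) = n - 1 := ⟨⟨n - 1, by omega⟩, rfl⟩
  rw [← hm] at h1 h2 ⊢
  obtain ⟨b, rfl⟩ := toMB_surjective β
  obtain ⟨g, rfl⟩ := toMB_surjective γ
  obtain ⟨δ, hδ⟩ := h1
  obtain ⟨d, rfl⟩ := toMB_surjective δ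
  rw [X_coe, ← toMB_append, ← toMB_append, toMB_eq_toMB_iff] at hδ
  have hb : m ∉ b := fun hmem => h2 (genDvd_toMB_of_mem hmem)
  obtain ⟨e, he⟩ := exists_append_singleton_of_append_equiv hb hδ
  exact ⟨toMB e, by rw [X_coe, ← toMB_append, toMB_eq_toMB_iff.2 he]⟩
end

section
/- Let n ≥ 2 and let β ∈ SB_n be a simple braid with x_{n−1} | β. Then either x_{n−1} right-divides β or x_{n−1} left-divides β, i.e., β = x_{n−1} ε for some ε ∈ MB_∞ or β = δ x_{n−1} for some δ ∈ MB_∞. -/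
/-!
Both braid relations have the same letters on either side, so the set of letters of a positive
braid is well defined; hence if `x_{n-1}` divides a simple braid `β = ∏ x_w`, then `n - 1` occurs
in the word `w = u ++ (n - 1) :: v`. Since `n - 1` is the largest admissible index and each index
occurs once, `n - 2` is missing from `u` or from `v`; all letters of that part then commute with
`x_{n-1}`, which can be moved to the corresponding end of the word.
-/

/-- The set of generators occurring in a positive braid (`SetSemiring ℕ+` is `Set ℕ+` with
`+ = ∪`). -/
noncomputable def letters : MB →* Multiplicative (SetSemiring ℕ+) :=
  braidCon.lift (FreeMonoid.lift fun i => .ofAdd (Set.up {i})) <|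
    Con.conGen_le.mpr fun a b h => by
      rw [Con.ker_rel]
      rcases h with ⟨i, rfl, rfl⟩ | ⟨i, j, -, rfl, rfl⟩ <;>
        simp only [map_mul, FreeMonoid.lift_eval_of, ← ofAdd_add, ← Set.up_union,
          EmbeddingLike.apply_eq_iff_eq] <;>
        ext <;> simp only [Set.mem_union, Set.mem_singleton_iff] <;> tauto

lemma letters_braidGen (i : ℕ+) : letters (braidGen i) = .ofAdd (Set.up {i}) :=
  (Con.lift_mk' _ _).trans (FreeMonoid.lift_eval_of _ _)

lemma X_eq_braidGen_toPNat' (i : ℕ) : X i = braidGen i.toPNat' := by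
  rw [X]
  congr 1
  apply PNat.eq
  simp only [Nat.toPNat'_coe, PNat.mk_coe]
  split_ifs <;> omega

lemma mem_letters_prod_map_X {w : List ℕ} {i : ℕ+} :
    i ∈ (letters (w.map X).prod).toAdd.down ↔ ∃ j ∈ w, j.toPNat' = i := by
  induction w with
  | nil => simp [SetSemiring.down_zero]
  | cons j w ih =>
    simp [X_eq_braidGen_toPNat', letters_braidGen, SetSemiring.down_add, ih, eq_comm]

lemma GenDvd.toPNat'_mem_letters {i : ℕ} {β : MB} (h : GenDvd i β) :
    i.toPNat' ∈ (letters β).toAdd.down := by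
  obtain ⟨δ, ε, rfl⟩ := h
  simp [X_eq_braidGen_toPNat', letters_braidGen, SetSemiring.down_add]

lemma X_commute_X {a b : ℕ} (ha : 1 ≤ a) (hab : a + 2 ≤ b) : Commute (X a) (X b) := by
  simp only [Commute, SemiconjBy, X_eq_braidGen_toPNat', braidGen, ← map_mul]
  refine (Con.eq braidCon).mpr (ConGen.Rel.of _ _ (Or.inr ⟨_, _, ?_, rfl, rfl⟩))
  rw [← PNat.coe_le_coe, PNat.add_coe, PNat.val_ofNat, Nat.toPNat'_coe, Nat.toPNat'_coe]
  split_ifs <;> omega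

lemma X_commute_prod_map_X {k : ℕ} {u : List ℕ} (hu : ∀ j ∈ u, 1 ≤ j ∧ j + 2 ≤ k) :
    Commute (X k) (u.map X).prod :=
  Commute.list_prod_right _ _ <| by
    simpa only [List.forall_mem_map] using fun j hj => (X_commute_X (hu j hj).1 (hu j hj).2).symm

theorem genDvdL_or_genDvdR_prod_map_X_of_nodup {k : ℕ} {w : List ℕ} (hw : w.Nodup)
    (hbound : ∀ j ∈ w, 1 ≤ j ∧ j ≤ k) (hk : k ∈ w) :
    GenDvdL k (w.map X).prod ∨ GenDvdR k (w.map X).prod := by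
  obtain ⟨u, v, rfl⟩ := List.append_of_mem hk
  obtain ⟨-, hv, hdisj⟩ := List.nodup_append.mp hw
  have hprod : ((u ++ k :: v).map X).prod = (u.map X).prod * (X k * (v.map X).prod) := by
    simp only [List.map_append, List.map_cons, List.prod_append, List.prod_cons]
  have hku : k ∉ u := fun hc => hdisj k hc k List.mem_cons_self rfl
  have hkv : k ∉ v := (List.nodup_cons.mp hv).1
  by_cases hpred : k - 1 ∈ v
  · have hcomm : Commute (X k) (u.map X).prod := X_commute_prod_map_X fun j hj => by
      have := hbound j (List.mem_append_left _ hj)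
      have : j ≠ k := fun hc => hku (hc ▸ hj)
      have : j ≠ k - 1 := fun hc => hdisj j hj j (List.mem_cons_of_mem _ (hc ▸ hpred)) rfl
      omega
    exact .inl ⟨(u.map X).prod * (v.map X).prod, by rw [hprod, ← mul_assoc, ← hcomm.eq, mul_assoc]⟩
  · have hcomm : Commute (X k) (v.map X).prod := X_commute_prod_map_X fun j hj => by
      have := hbound j (List.mem_append_right _ (List.mem_cons_of_mem _ hj))
      have : j ≠ k := fun hc => hkv (hc ▸ hj)
      have : j ≠ k - 1 := fun hc => hpred (hc ▸ hj)
      omega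
    exact .inr ⟨(u.map X).prod * (v.map X).prod, by rw [hprod, hcomm.eq, ← mul_assoc]⟩

theorem gen_dvd_simple_left_or_right_general (n : ℕ) (β : MB) (hβ : β ∈ SB n)
    (h : GenDvd (n - 1) β) :
    GenDvdL (n - 1) β ∨ GenDvdR (n - 1) β := by
  obtain ⟨w, hw, hbound, rfl⟩ := hβ
  obtain ⟨j, hj, hjn⟩ := mem_letters_prod_map_X.mp h.toPNat'_mem_letters
  have hj_eq : j = n - 1 := by
    have := hbound j hj
    simp only [← PNat.coe_inj, Nat.toPNat'_coe] at hjn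
    split_ifs at hjn <;> omega
  exact genDvdL_or_genDvdR_prod_map_X_of_nodup hw
    (fun i hi => (hbound i hi).imp_right Nat.le_sub_one_of_lt) (hj_eq ▸ hj)

/-- Lemma 2.3: if `β ∈ SB_n` and `x_{n-1} ∣ β`, then `x_{n-1}` left-divides or
right-divides `β`. -/
theorem gen_dvd_simple_left_or_right (n : ℕ) (hn : 2 ≤ n) (β : MB) (hβ : β ∈ SB n)
    (h : GenDvd (n - 1) β) :
    GenDvdL (n - 1) β ∨ GenDvdR (n - 1) β :=
  gen_dvd_simple_left_or_right_general n β hβ h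
end
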